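/- arXiv:2206.06484 — 2 statements merged into one kernel-verified Lean document; each statement's English description precedes it below -/
import Mathlib

section
/- For any measurable m : Ω → [0,1] with ‖m‖₁ > 0, letting D* = sup over segmentations s of D_m(s), one has F_m(1/2) ≤ F_m((1 - D*/2)-); i.e., the largest Accuracy-optimal volume is at most the smallest Dice-optimal volume. -/
/-!
At a point where `m = 1/2` every segmentation pays an error `s(1-m) + (1-s)m = 1/2`, so if
`p = λ(m = 1/2)` then `2∫sm ≤ ‖s‖₁ + ‖m‖₁ - p/2`, and hence `D* ≤ 1 - p/4`. Thus `D* ≤ 1`, and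
`D* < 1` unless `p = 0`. Either way `{m ≥ 1/2}` is, up to a null set, contained in `{m > D*/2}`,
which is the inequality `F_m(1/2) ≤ F_m((1 - D*/2)-)`.
-/

open MeasureTheory Set

noncomputable section

/-- Normalized Lebesgue measure on the unit cube `[0,1]^n`. -/
def cubeMeasure (n : ℕ) : Measure (Fin n → ℝ) :=
  volume.restrict (Set.univ.pi fun _ => Set.Icc (0:ℝ) 1)

/-- A segmentation: a measurable `{0,1}`-valued function on the cube. -/
def IsSeg {n : ℕ} (s : (Fin n → ℝ) → ℝ) : Prop :=
  Measurable s ∧ ∀ ω, s ω = 0 ∨ s ω = 1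

/-- A marginal function: a measurable `[0,1]`-valued function on the cube. -/
def IsMarg {n : ℕ} (m : (Fin n → ℝ) → ℝ) : Prop :=
  Measurable m ∧ ∀ ω, m ω ∈ Set.Icc (0:ℝ) 1

/-- The volume `‖f‖₁ = ∫ f dλ` (for nonnegative `f`). -/
def vol {n : ℕ} (f : (Fin n → ℝ) → ℝ) : ℝ := ∫ ω, f ω ∂(cubeMeasure n)

/-- `F_m(t) = λ({ω : 1 - m(ω) ≤ t})`. -/
def Fcdf {n : ℕ} (m : (Fin n → ℝ) → ℝ) (t : ℝ) : ℝ :=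
  ((cubeMeasure n) {ω | 1 - m ω ≤ t}).toReal

/-- The left limit `F_m(t-) = λ({ω : 1 - m(ω) < t})`. -/
def FcdfMinus {n : ℕ} (m : (Fin n → ℝ) → ℝ) (t : ℝ) : ℝ :=
  ((cubeMeasure n) {ω | 1 - m ω < t}).toReal

/-- The generalized inverse (quantile function) `F_m⁻¹(v) = inf{t ∈ [0,1] : F_m(t) ≥ v}`. -/
def Finv {n : ℕ} (m : (Fin n → ℝ) → ℝ) (v : ℝ) : ℝ :=
  sInf {t | t ∈ Set.Icc (0:ℝ) 1 ∧ v ≤ Fcdf m t}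

/-- Dice. -/
def Dice {n : ℕ} (m s : (Fin n → ℝ) → ℝ) : ℝ :=
  2 * (∫ ω, s ω * m ω ∂(cubeMeasure n)) / (vol s + vol m)

section UnitIntervalValued

variable {α : Type*} [MeasurableSpace α] {μ : Measure α}

lemma integrable_of_mem_Icc [IsFiniteMeasure μ] {f : α → ℝ} (hf : Measurable f)
    (hf01 : ∀ x, f x ∈ Icc (0 : ℝ) 1) : Integrable f μ :=
  Integrable.of_bound hf.aestronglyMeasurable 1 <| ae_of_all _ fun x => by
    rw [Real.norm_eq_abs, abs_le]
    exact ⟨by linarith [(hf01 x).1], (hf01 x).2⟩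

lemma add_sub_two_mul_nonneg {s m : ℝ} (hs : s ∈ Icc (0 : ℝ) 1) (hm : m ∈ Icc (0 : ℝ) 1) :
    0 ≤ s + m - 2 * (s * m) := by
  have : s + m - 2 * (s * m) = s * (1 - m) + (1 - s) * m := by ring
  rw [this]
  exact add_nonneg (mul_nonneg hs.1 (by linarith [hm.2])) (mul_nonneg (by linarith [hs.2]) hm.1)

lemma measureReal_eq_half_div_two_le [IsFiniteMeasure μ] {s m : α → ℝ} (hs : Measurable s)
    (hs01 : ∀ x, s x ∈ Icc (0 : ℝ) 1) (hm : Measurable m) (hm01 : ∀ x, m x ∈ Icc (0 : ℝ) 1) :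
    μ.real {x | m x = 1 / 2} / 2 ≤ ∫ x, s x ∂μ + ∫ x, m x ∂μ - 2 * ∫ x, s x * m x ∂μ := by
  set E := {x | m x = 1 / 2}
  have hE : MeasurableSet E := hm (measurableSet_singleton _)
  have is : Integrable s μ := integrable_of_mem_Icc hs hs01
  have im : Integrable m μ := integrable_of_mem_Icc hm hm01
  have ism : Integrable (fun x => s x * m x) μ :=
    integrable_of_mem_Icc (hs.mul hm) fun x =>
      ⟨mul_nonneg (hs01 x).1 (hm01 x).1, mul_le_one₀ (hs01 x).2 (hm01 x).1 (hm01 x).2⟩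
  have hle : E.indicator (fun _ => (1 / 2 : ℝ)) ≤ fun x => s x + m x - 2 * (s x * m x) := by
    intro x
    by_cases hx : x ∈ E
    · rw [indicator_of_mem hx]
      show (1 / 2 : ℝ) ≤ s x + m x - 2 * (s x * m x)
      rw [show m x = 1 / 2 from hx]
      linarith
    · rw [indicator_of_notMem hx]
      exact add_sub_two_mul_nonneg (hs01 x) (hm01 x)
  calc μ.real E / 2 = ∫ x, E.indicator (fun _ => (1 / 2 : ℝ)) x ∂μ := by
        rw [integral_indicator_const _ hE, smul_eq_mul]; ring
    _ ≤ ∫ x, s x + m x - 2 * (s x * m x) ∂μ :=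
        integral_mono ((integrable_const _).indicator hE) ((is.add im).sub (ism.const_mul 2)) hle
    _ = ∫ x, s x ∂μ + ∫ x, m x ∂μ - 2 * ∫ x, s x * m x ∂μ := by
        rw [integral_sub (f := fun x => s x + m x) (is.add im) (ism.const_mul 2),
          integral_add is im, integral_const_mul]

lemma integral_le_one_of_mem_Icc [IsProbabilityMeasure μ] {f : α → ℝ} (hf : Measurable f)
    (hf01 : ∀ x, f x ∈ Icc (0 : ℝ) 1) : ∫ x, f x ∂μ ≤ 1 := by
  simpa using integral_mono (μ := μ) (integrable_of_mem_Icc hf hf01) (integrable_const (1 : ℝ))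
    fun x => (hf01 x).2

lemma two_integral_mul_le [IsProbabilityMeasure μ] {s m : α → ℝ} (hs : Measurable s)
    (hs01 : ∀ x, s x ∈ Icc (0 : ℝ) 1) (hm : Measurable m) (hm01 : ∀ x, m x ∈ Icc (0 : ℝ) 1) :
    2 * ∫ x, s x * m x ∂μ ≤ (1 - μ.real {x | m x = 1 / 2} / 4) * (∫ x, s x ∂μ + ∫ x, m x ∂μ) := by
  have hp := measureReal_eq_half_div_two_le (μ := μ) hs hs01 hm hm01
  have hp0 : 0 ≤ μ.real {x | m x = 1 / 2} := measureReal_nonneg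
  have hs1 := integral_le_one_of_mem_Icc (μ := μ) hs hs01
  have hm1 := integral_le_one_of_mem_Icc (μ := μ) hm hm01
  nlinarith

lemma measure_le_half_le_measure_lt [IsFiniteMeasure μ] {m : α → ℝ} {D : ℝ}
    (hD : D ≤ 1 - μ.real {x | m x = 1 / 2} / 4) :
    μ {x | 1 - m x ≤ 1 / 2} ≤ μ {x | 1 - m x < 1 - D / 2} := by
  refine measure_mono_ae ?_
  by_cases hE : μ {x | m x = 1 / 2} = 0
  · have hD1 : D ≤ 1 := by rwa [measureReal_def, hE, ENNReal.toReal_zero, zero_div, sub_zero] at hD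
    filter_upwards [measure_eq_zero_iff_ae_notMem.mp hE]
      with x (hne : m x ≠ 1 / 2) (hxle : 1 - m x ≤ 1 / 2)
    have : 1 / 2 < m x := lt_of_le_of_ne (by linarith) hne.symm
    show 1 - m x < 1 - D / 2
    linarith
  · have hp : 0 < μ.real {x | m x = 1 / 2} := ENNReal.toReal_pos hE (measure_ne_top _ _)
    refine ae_of_all _ fun x (hxle : 1 - m x ≤ 1 / 2) => ?_
    show 1 - m x < 1 - D / 2
    linarith

end UnitIntervalValued

instance (n : ℕ) : IsProbabilityMeasure (cubeMeasure n) := by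
  constructor
  rw [cubeMeasure, Measure.restrict_apply_univ, volume_pi_pi]
  simp [Real.volume_Icc]

lemma IsSeg.mem_Icc {n : ℕ} {s : (Fin n → ℝ) → ℝ} (hs : IsSeg s) (ω : Fin n → ℝ) :
    s ω ∈ Icc (0 : ℝ) 1 := by
  rcases hs.2 ω with h | h <;> simp [h]

lemma Dice_le_one_sub {n : ℕ} {m s : (Fin n → ℝ) → ℝ} (hm : IsMarg m) (hs : IsSeg s) :
    Dice m s ≤ 1 - (cubeMeasure n).real {ω | m ω = 1 / 2} / 4 :=
  div_le_of_le_mul₀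
    (add_nonneg (integral_nonneg fun ω => (hs.mem_Icc ω).1) (integral_nonneg fun ω => (hm.2 ω).1))
    (by linarith [measureReal_le_one (μ := cubeMeasure n) (s := {ω | m ω = 1 / 2})])
    (two_integral_mul_le hs.1 hs.mem_Icc hm.1 hm.2)

lemma sSup_Dice_le {n : ℕ} {m : (Fin n → ℝ) → ℝ} (hm : IsMarg m) :
    sSup {x : ℝ | ∃ s, IsSeg s ∧ x = Dice m s} ≤
      1 - (cubeMeasure n).real {ω | m ω = 1 / 2} / 4 := by
  refine csSup_le ⟨_, fun _ => 0, ⟨measurable_const, fun _ => Or.inl rfl⟩, rfl⟩ ?_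
  rintro x ⟨s, hs, rfl⟩
  exact Dice_le_one_sub hm hs

theorem stmt11_general {n : ℕ} {m : (Fin n → ℝ) → ℝ} (hm : IsMarg m) :
    Fcdf m (1/2) ≤
      FcdfMinus m (1 - (sSup {x : ℝ | ∃ s, IsSeg s ∧ x = Dice m s}) / 2) :=
  ENNReal.toReal_mono (measure_ne_top _ _) (measure_le_half_le_measure_lt (sSup_Dice_le hm))

theorem stmt11 {n : ℕ} {m : (Fin n → ℝ) → ℝ} (hm : IsMarg m) (h0 : 0 < vol m) :
    Fcdf m (1/2) ≤
      FcdfMinus m (1 - (sSup {x : ℝ | ∃ s, IsSeg s ∧ x = Dice m s}) / 2) :=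
  stmt11_general hm

end
end

section
/- For any measurable m : Ω → [0,1], the maximal Accuracy sup_s A_m(s) equals 1 - ‖m‖₁ + ∫₀^{F_m(1/2)} (1 - 2F_m⁻¹(u)) du, and is attained by the segmentation s(ω) = 1{m(ω) ≥ 1/2}. -/
open MeasureTheory Set

noncomputable section

/-- Accuracy. -/
def Accu {n : ℕ} (m s : (Fin n → ℝ) → ℝ) : ℝ :=
  ∫ ω, (s ω * m ω + (1 - s ω) * (1 - m ω)) ∂(cubeMeasure n)

/-!
Pointwise, `s m + (1 - s)(1 - m)` is a convex combination of `m` and `1 - m`, so it is at most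
`max m (1 - m) = (1 - m) + 𝟙{m ≥ 1/2} (2m - 1)`, with equality for `s = 𝟙{m ≥ 1/2}`. The remaining
integral `∫_{1 - m ≤ 1/2} (1 - 2(1 - m))` is rewritten through the quantile transform: `F_m⁻¹` is
the Galois partner of the right-continuous `F_m` (`F_m⁻¹ u ≤ t ↔ u ≤ F_m t`), hence it pushes
Lebesgue measure on `(0, F_m t₀]` forward to the law of `1 - m` restricted to `{1 - m ≤ t₀}`.
-/

open ProbabilityTheory Filter Topology

instance isProbabilityMeasure_cubeMeasure (n : ℕ) : IsProbabilityMeasure (cubeMeasure n) := by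
  constructor
  rw [cubeMeasure, Measure.restrict_apply_univ, volume_pi_pi]
  simp [Real.volume_Icc]

variable {n : ℕ} {m : (Fin n → ℝ) → ℝ}

section Quantile

lemma Fcdf_nonneg (t : ℝ) : 0 ≤ Fcdf m t := ENNReal.toReal_nonneg

lemma Fcdf_le_one (t : ℝ) : Fcdf m t ≤ 1 :=
  measureReal_le_one

lemma monotone_Fcdf : Monotone (Fcdf m) := fun _ _ h =>
  ENNReal.toReal_mono (measure_ne_top _ _) (measure_mono fun _ hω => le_trans hω h)

lemma Fcdf_eq_cdf (hm : Measurable m) (t : ℝ) :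
    Fcdf m t = cdf ((cubeMeasure n).map fun ω => 1 - m ω) t := by
  have hX : Measurable fun ω => 1 - m ω := measurable_const.sub hm
  have := Measure.isProbabilityMeasure_map (μ := cubeMeasure n) hX.aemeasurable
  rw [cdf_eq_real, measureReal_def, Measure.map_apply hX measurableSet_Iic]
  rfl

lemma continuousWithinAt_Fcdf_Ici (hm : Measurable m) (t : ℝ) :
    ContinuousWithinAt (Fcdf m) (Ici t) t := by
  rw [funext (Fcdf_eq_cdf hm)]
  exact StieltjesFunction.right_continuous _ t

lemma Fcdf_of_neg (hm1 : ∀ ω, m ω ≤ 1) {t : ℝ} (ht : t < 0) : Fcdf m t = 0 := by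
  have : {ω | 1 - m ω ≤ t} = ∅ := eq_empty_of_forall_notMem fun ω hω => by
    linarith [hm1 ω, show 1 - m ω ≤ t from hω]
  rw [Fcdf, this, measure_empty, ENNReal.toReal_zero]

lemma Fcdf_one (hm0 : ∀ ω, 0 ≤ m ω) : Fcdf m 1 = 1 := by
  have : {ω | 1 - m ω ≤ 1} = univ := eq_univ_of_forall fun ω => by
    simpa only [mem_ofPred_eq, sub_le_self_iff] using hm0 ω
  rw [Fcdf, this, measure_univ, ENNReal.toReal_one]

lemma Finv_le_iff (hm : IsMarg m) {u : ℝ} (hu : u ∈ Ioc 0 1) (t : ℝ) :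
    Finv m u ≤ t ↔ u ≤ Fcdf m t := by
  have hbdd : BddBelow {t | t ∈ Icc (0:ℝ) 1 ∧ u ≤ Fcdf m t} := ⟨0, fun _ h => h.1.1⟩
  have hone : (1:ℝ) ∈ {t | t ∈ Icc (0:ℝ) 1 ∧ u ≤ Fcdf m t} :=
    ⟨⟨zero_le_one, le_rfl⟩, hu.2.trans (Fcdf_one fun ω => (hm.2 ω).1).ge⟩
  constructor
  · intro h
    refine le_trans ?_ (monotone_Fcdf h)
    -- the infimum is attained, by right continuity of `F_m`
    refine ge_of_tendsto ((continuousWithinAt_Fcdf_Ici hm.1 _).mono Ioi_subset_Ici_self)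
      (eventually_nhdsWithin_of_forall fun t' ht' => ?_)
    obtain ⟨s, ⟨-, hs⟩, hst'⟩ := exists_lt_of_csInf_lt ⟨1, hone⟩ ht'
    exact hs.trans (monotone_Fcdf hst'.le)
  · intro h
    rcases lt_or_ge t 0 with ht0 | ht0
    · rw [Fcdf_of_neg (fun ω => (hm.2 ω).2) ht0] at h
      exact absurd h (not_le.2 hu.1)
    rcases le_or_gt t 1 with ht1 | ht1
    · exact csInf_le hbdd ⟨⟨ht0, ht1⟩, h⟩
    · exact (csInf_le hbdd hone).trans ht1.le

lemma monotoneOn_Finv (hm : IsMarg m) : MonotoneOn (Finv m) (Ioc 0 1) := fun _ hu _ hv huv =>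
  (Finv_le_iff hm hu _).2 (huv.trans ((Finv_le_iff hm hv _).1 le_rfl))

lemma aemeasurable_Finv (hm : IsMarg m) (t₀ : ℝ) :
    AEMeasurable (Finv m) (volume.restrict (Ioc 0 (Fcdf m t₀))) :=
  aemeasurable_restrict_of_monotoneOn measurableSet_Ioc
    ((monotoneOn_Finv hm).mono (Ioc_subset_Ioc_right (Fcdf_le_one _)))

lemma map_Finv_volume_restrict (hm : IsMarg m) (t₀ : ℝ) :
    (volume.restrict (Ioc 0 (Fcdf m t₀))).map (Finv m)
      = ((cubeMeasure n).restrict {ω | 1 - m ω ≤ t₀}).map fun ω => 1 - m ω := by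
  have hX : Measurable fun ω => 1 - m ω := measurable_const.sub hm.1
  refine Measure.ext_of_Iic _ _ fun t => ?_
  have hpre : Finv m ⁻¹' Iic t ∩ Ioc 0 (Fcdf m t₀) = Ioc 0 (min (Fcdf m t₀) (Fcdf m t)) := by
    ext u
    simp only [mem_inter_iff, mem_preimage, mem_Iic, mem_Ioc, le_min_iff]
    constructor
    · rintro ⟨hut, hu0, hut₀⟩
      exact ⟨hu0, hut₀, (Finv_le_iff hm ⟨hu0, hut₀.trans (Fcdf_le_one _)⟩ t).1 hut⟩
    · rintro ⟨hu0, hut₀, hut⟩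
      exact ⟨(Finv_le_iff hm ⟨hu0, hut₀.trans (Fcdf_le_one _)⟩ t).2 hut, hu0, hut₀⟩
  rw [Measure.map_apply_of_aemeasurable (aemeasurable_Finv hm t₀) measurableSet_Iic,
    Measure.restrict_apply' measurableSet_Ioc, hpre, Real.volume_Ioc, sub_zero,
    ← monotone_Fcdf.map_min, Fcdf, ENNReal.ofReal_toReal (measure_ne_top _ _),
    Measure.map_apply hX measurableSet_Iic, Measure.restrict_apply (hX measurableSet_Iic)]
  congr 1
  ext ω
  simp only [mem_ofPred_eq, mem_inter_iff, mem_preimage, mem_Iic, le_min_iff, and_comm]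

lemma intervalIntegral_comp_Finv (hm : IsMarg m) (t₀ : ℝ) {g : ℝ → ℝ} (hg : Measurable g) :
    ∫ u in (0:ℝ)..Fcdf m t₀, g (Finv m u)
      = ∫ ω in {ω | 1 - m ω ≤ t₀}, g (1 - m ω) ∂cubeMeasure n := by
  have hX : Measurable fun ω => 1 - m ω := measurable_const.sub hm.1
  rw [intervalIntegral.integral_of_le (Fcdf_nonneg _),
    ← integral_map (aemeasurable_Finv hm t₀) hg.aestronglyMeasurable, map_Finv_volume_restrict hm,
    integral_map hX.aemeasurable hg.aestronglyMeasurable]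

end Quantile

section Accuracy

lemma IsMarg.integrable (hm : IsMarg m) : Integrable m (cubeMeasure n) :=
  .of_bound hm.1.aestronglyMeasurable 1 <| .of_forall fun ω => by
    rw [Real.norm_eq_abs, abs_of_nonneg (hm.2 ω).1]; exact (hm.2 ω).2

lemma IsMarg.integrable_one_sub (hm : IsMarg m) :
    Integrable (fun ω => 1 - m ω) (cubeMeasure n) :=
  (integrable_const 1).sub hm.integrable

lemma Accu_indicator_half (m : (Fin n → ℝ) → ℝ) :
    Accu m ({ω | (1:ℝ)/2 ≤ m ω}.indicator fun _ => 1)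
      = ∫ ω, max (m ω) (1 - m ω) ∂cubeMeasure n := by
  refine integral_congr_ae (.of_forall fun ω => ?_)
  dsimp only
  by_cases h : (1:ℝ)/2 ≤ m ω
  · rw [indicator_of_mem (s := {ω | (1:ℝ)/2 ≤ m ω}) h, max_eq_left (by linarith)]; ring
  · rw [indicator_of_notMem (s := {ω | (1:ℝ)/2 ≤ m ω}) h, max_eq_right (by linarith)]; ring

lemma Accu_le_integral_max (hm : IsMarg m) {s : (Fin n → ℝ) → ℝ} (hs : ∀ ω, s ω ∈ Icc 0 1) :
    Accu m s ≤ ∫ ω, max (m ω) (1 - m ω) ∂cubeMeasure n := by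
  refine integral_mono_of_nonneg (.of_forall fun ω => ?_)
    (hm.integrable.sup hm.integrable_one_sub) (.of_forall fun ω => ?_)
  all_goals
    obtain ⟨hs0, hs1⟩ := hs ω
    obtain ⟨hm0, hm1⟩ := hm.2 ω
    dsimp only [Pi.zero_apply]
  · exact add_nonneg (mul_nonneg hs0 hm0) (mul_nonneg (by linarith) (by linarith))
  · nlinarith [mul_nonneg hs0 (sub_nonneg.2 (le_max_left (m ω) (1 - m ω))),
      mul_nonneg (sub_nonneg.2 hs1) (sub_nonneg.2 (le_max_right (m ω) (1 - m ω)))]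

lemma integral_max_one_sub (hm : IsMarg m) :
    ∫ ω, max (m ω) (1 - m ω) ∂cubeMeasure n
      = 1 - vol m + ∫ ω in {ω | (1:ℝ)/2 ≤ m ω}, (2 * m ω - 1) ∂cubeMeasure n := by
  have hA : MeasurableSet {ω | (1:ℝ)/2 ≤ m ω} := measurableSet_le measurable_const hm.1
  have hgain : Integrable (fun ω => 2 * m ω - 1) (cubeMeasure n) :=
    (hm.integrable.const_mul 2).sub (integrable_const 1)
  have hsplit : (fun ω => max (m ω) (1 - m ω))
      = fun ω => (1 - m ω) + {ω | (1:ℝ)/2 ≤ m ω}.indicator (fun ω => 2 * m ω - 1) ω := by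
    ext ω
    by_cases h : (1:ℝ)/2 ≤ m ω
    · rw [indicator_of_mem (s := {ω | (1:ℝ)/2 ≤ m ω}) h, max_eq_left (by linarith)]; ring
    · rw [indicator_of_notMem (s := {ω | (1:ℝ)/2 ≤ m ω}) h, max_eq_right (by linarith)]; ring
  rw [hsplit, integral_add hm.integrable_one_sub (hgain.indicator hA),
    integral_sub (integrable_const 1) hm.integrable, integral_indicator hA]
  simp [vol]

end Accuracy

theorem stmt19 {n : ℕ} {m : (Fin n → ℝ) → ℝ} (hm : IsMarg m) :
    (Accu m (Set.indicator {ω | (1:ℝ)/2 ≤ m ω} (fun _ => (1:ℝ))) =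
      1 - vol m + ∫ u in (0:ℝ)..(Fcdf m (1/2)), (1 - 2 * Finv m u)) ∧
    ∀ s, IsSeg s →
      Accu m s ≤ Accu m (Set.indicator {ω | (1:ℝ)/2 ≤ m ω} (fun _ => (1:ℝ))) := by
  have hlevel : {ω | 1 - m ω ≤ 1/2} = {ω | (1:ℝ)/2 ≤ m ω} := by
    ext ω
    simp only [mem_ofPred_eq]
    constructor <;> intro h <;> linarith
  refine ⟨?_, fun s hs => ?_⟩
  · rw [Accu_indicator_half, integral_max_one_sub hm,
      intervalIntegral_comp_Finv hm _ (by fun_prop : Measurable fun y : ℝ => 1 - 2 * y), hlevel]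
    congr 2
    ext ω
    ring
  · rw [Accu_indicator_half]
    exact Accu_le_integral_max hm fun ω => by rcases hs.2 ω with h | h <;> simp [h]
end
end
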